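/- Let p be a prime. If w is an automorphism of order p^k of an infinite abelian group Y of exponent dividing p^n, then the fixed-point subgroup C_Y(w) is infinite. -/

import Mathlib

open Polynomial

-- (X-1)^{p^k} - (X^{p^k} - 1) is divisible by p in ℤ[X]
lemma aux_poly (p : ℕ) (hp : p.Prime) (k : ℕ) :
    ∃ g : ℤ[X], ((X : ℤ[X]) - 1) ^ (p ^ k) - (X ^ (p ^ k) - 1) = C (p : ℤ) * g := by
  haveI : Fact p.Prime := ⟨hp⟩
  have hmap : Polynomial.map (Int.castRingHom (ZMod p))
      (((X : ℤ[X]) - 1) ^ (p ^ k) - (X ^ (p ^ k) - 1)) = 0 := by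
    simp only [Polynomial.map_sub, Polynomial.map_pow, Polynomial.map_one, Polynomial.map_X]
    rw [sub_pow_char_pow]
    simp
  have hdvd : C (p : ℤ) ∣ (((X : ℤ[X]) - 1) ^ (p ^ k) - (X ^ (p ^ k) - 1)) := by
    rw [Polynomial.C_dvd_iff_dvd_coeff]
    intro i
    have := congrArg (fun q => Polynomial.coeff q i) hmap
    simp only [Polynomial.coeff_map, Polynomial.coeff_zero] at this
    exact_mod_cast (ZMod.intCast_zmod_eq_zero_iff_dvd _ p).mp this
  exact hdvd

-- finiteness of iterated kernels
lemma aux_ker {A : Type*} [AddCommGroup A] (f : A →+ A)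
    (h1 : {a : A | f a = 0}.Finite) : ∀ i, {a : A | f^[i] a = 0}.Finite := by
  intro i
  induction i with
  | zero =>
    have : {a : A | f^[0] a = 0} ⊆ {(0 : A)} := by
      intro a ha; simpa using ha
    exact Set.Finite.subset (Set.finite_singleton 0) this
  | succ i ih =>
    have hsub : {a : A | f^[i+1] a = 0} ⊆
        ⋃ b ∈ {a : A | f^[i] a = 0}, {a : A | f a = b} := by
      intro a ha
      simp only [Set.mem_setOf_eq, Function.iterate_succ, Function.comp_apply] at ha
      exact Set.mem_biUnion ha rfl
    refine Set.Finite.subset (Set.Finite.biUnion ih ?_) hsub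
    intro b _
    rcases Set.eq_empty_or_nonempty {a : A | f a = b} with he | ⟨a₀, ha₀⟩
    · simp [he]
    · have : {a : A | f a = b} ⊆ (fun c => a₀ + c) '' {a : A | f a = 0} := by
        intro a ha
        refine ⟨a - a₀, ?_, by simp⟩
        simp only [Set.mem_setOf_eq] at ha ha₀ ⊢
        rw [map_sub, ha, ha₀, sub_self]
      exact Set.Finite.subset (Set.Finite.image _ h1) this

theorem stmt12 (p : ℕ) (hp : p.Prime) (n k : ℕ)
    (Y : Type*) [CommGroup Y] [Infinite Y]
    (hexp : ∀ y : Y, y ^ p ^ n = 1)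
    (w : MulAut Y) (hw : w ^ p ^ k = 1) :
    {y : Y | w y = y}.Infinite := by
  by_contra hfin
  rw [Set.not_infinite] at hfin
  set A := Additive Y
  -- the linear endomorphism induced by w
  let W : A →ₗ[ℤ] A := (MonoidHom.toAdditive w.toMonoidHom).toIntLinearMap
  have hWapp : ∀ a : A, W a = Additive.ofMul (w (Additive.toMul a)) := fun a => rfl
  have hWpow : ∀ (m : ℕ) (a : A), (W ^ m) a = Additive.ofMul ((w ^ m) (Additive.toMul a)) := by
    intro m
    induction m with
    | zero => intro a; simp
    | succ m ih =>
      intro a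
      rw [pow_succ, pow_succ]
      have : (W ^ m * W) a = (W ^ m) (W a) := rfl
      rw [this, hWapp, ih]
      rfl
  have hW1 : W ^ (p ^ k) = 1 := by
    ext a
    rw [hWpow, hw]
    rfl
  -- p^n kills A
  have hpn : ∀ a : A, (p : ℤ) ^ n • a = 0 := by
    intro a
    have : (Additive.toMul a) ^ (p ^ n) = 1 := hexp _
    have h2 : (p ^ n : ℕ) • a = 0 := this
    calc (p : ℤ) ^ n • a = ((p ^ n : ℕ) : ℤ) • a := by push_cast; ring_nf
      _ = (p ^ n : ℕ) • a := natCast_zsmul a (p ^ n)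
      _ = 0 := h2
  -- nilpotency of W - 1
  obtain ⟨g, hg⟩ := aux_poly p hp k
  have hnil : (W - 1) ^ (p ^ k * n) = 0 := by
    have hev := congrArg (Polynomial.aeval W) hg
    simp only [map_sub, map_pow, map_mul, map_one, Polynomial.aeval_X, Polynomial.aeval_C] at hev
    rw [hW1, sub_self, sub_zero] at hev
    have hev2 : (W - 1) ^ (p ^ k) = (p : ℤ) • Polynomial.aeval W g := by
      rw [hev, Algebra.smul_def]
    rw [pow_mul, hev2, _root_.smul_pow]
    ext a
    simp only [LinearMap.smul_apply, LinearMap.zero_apply]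
    exact hpn _
  -- kernel sets
  set D : A →+ A := (W - 1).toAddMonoidHom with hD
  have hD1 : {a : A | D a = 0}.Finite := by
    have heq : {a : A | D a = 0} = Additive.ofMul '' {y : Y | w y = y} := by
      ext a
      simp only [Set.mem_setOf_eq, Set.mem_image, hD, LinearMap.toAddMonoidHom_coe,
        LinearMap.sub_apply, Module.End.one_apply, sub_eq_zero]
      constructor
      · intro h
        exact ⟨Additive.toMul a, congrArg Additive.toMul h, rfl⟩
      · rintro ⟨y, hy, rfl⟩
        rw [hWapp]
        exact congrArg Additive.ofMul hy
    rw [heq]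
    exact hfin.image _
  have hDall := aux_ker D hD1 (p ^ k * n)
  have : {a : A | D^[p ^ k * n] a = 0} = Set.univ := by
    ext a
    simp only [Set.mem_setOf_eq, Set.mem_univ, iff_true]
    have hiter : D^[p ^ k * n] a = ((W - 1) ^ (p ^ k * n)) a := by
      rw [Module.End.pow_apply]
      rfl
    rw [hiter, hnil]
    rfl
  rw [this] at hDall
  exact Set.infinite_univ hDall
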